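/- arXiv:2304.06673 — 3 statements merged into one kernel-verified Lean document; each statement's English description precedes it below -/
import Mathlib

section
/- (Weighted trace-at-t₀ estimate, second energy inequality of the Third Step) Fix λ > 0. There exist constants C > 0 and s₀ ≥ 1 (depending only on T, λ, M) such that for every s ≥ s₀ and every function y : ℝ^d × [0,T] → ℝ which is continuous and bounded on Ω × [0,t₀] together with its continuous time derivative ∂_ty: ∫_Ω |y(x,t₀)|² e^{2sα(x,t₀)} dx ≤ (C/√s) ∫₀^{t₀} ∫_Ω ( (sφ(x,t))⁻¹ |∂_ty(x,t)|² + s³ φ(x,t)³ |y(x,t)|² ) e^{2sα(x,t)} dx dt. -/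
/-!
For fixed `x` put `g(t) = y(x,t)² e^{2sα(x,t)}`, so that `g' = (2yy' + 2sα'y²) e^{2sα}`.
Young's inequality `2yy' ≤ (√s sφ)⁻¹ y'² + √s sφ y²`, the bound `α' ≤ e^{2λM} T φ²` and
`T²φ ≥ 4` (as `t(T-t) ≤ T²/4`) give `g' ≤ (C/√s)((sφ)⁻¹|y'|² + s³φ³|y|²) e^{2sα}`.
Since `e^{2sα} → 0` as `t → 0⁺`, `g` extends continuously by `0` to `t = 0`, and integrating
over `(0, t₀)` bounds `g(t₀)`. Integrating in `x` and exchanging the integrals concludes; the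
right-hand side is integrable since `v³e^{-av} ≤ (3/a)³` keeps `s³φ³e^{2sα}` bounded.
-/

open MeasureTheory Real Set Filter Topology

lemma pow_three_mul_exp_neg_le {a v : ℝ} (ha : 0 < a) (hv : 0 ≤ v) :
    v ^ 3 * exp (-(a * v)) ≤ (3 / a) ^ 3 := by
  have hcube : (a * v / 3 * exp (-(a * v / 3))) ^ 3 ≤ 1 :=
    pow_le_one₀ (by positivity) <|
      (mul_exp_neg_le_exp_neg_one _).trans (exp_le_one_iff.mpr (by norm_num))
  have hrw : (a * v / 3 * exp (-(a * v / 3))) ^ 3 = (a / 3) ^ 3 * (v ^ 3 * exp (-(a * v))) := by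
    rw [mul_pow, ← exp_nat_mul]; ring_nf
  rw [hrw, ← le_div_iff₀' (by positivity), one_div, ← inv_pow, inv_div] at hcube
  exact hcube

noncomputable def traceConst (T E : ℝ) : ℝ := 1 + T ^ 4 / 16 + E * T ^ 3 / 2

section Absorption

variable {T s E φ : ℝ}

lemma one_le_traceConst (hT : 0 < T) (hE : 0 ≤ E) : 1 ≤ traceConst T E :=
  le_add_of_le_of_nonneg (le_add_of_nonneg_right (by positivity)) (by positivity)

lemma sqrt_mul_add_le_div_sqrt_mul_cube (hT : 0 < T) (hs : 1 ≤ s) (hE : 0 ≤ E)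
    (hφ : 4 ≤ T ^ 2 * φ) :
    √s * s * φ + 2 * s * (E * T * φ ^ 2) ≤
      traceConst T E / √s * (s ^ 3 * φ ^ 3) := by
  have hφ0 : 0 < φ := by nlinarith
  have hr : 1 ≤ √s := one_le_sqrt.mpr hs
  have hrs : √s ^ 2 = s := sq_sqrt (by linarith)
  rw [div_mul_eq_mul_div, le_div_iff₀ (by positivity)]
  have hs2 : s ^ 2 ≤ s ^ 3 := pow_le_pow_right₀ hs (by norm_num)
  have hrs3 : √s * s ≤ s ^ 3 := calc
    √s * s ≤ s * s := by gcongr; nlinarith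
    _ ≤ s ^ 3 := by rw [← sq]; exact hs2
  calc (√s * s * φ + 2 * s * (E * T * φ ^ 2)) * √s
      = s ^ 2 * φ * 1 + 2 * (√s * s) * E * T * φ ^ 2 * 1 := by linear_combination s * φ * hrs
    _ ≤ s ^ 3 * φ * (T ^ 4 * φ ^ 2 / 16) + 2 * s ^ 3 * E * T * φ ^ 2 * (T ^ 2 * φ / 4) := by
      gcongr ?_ * _ * ?_ + 2 * ?_ * _ * _ * _ * ?_ <;> nlinarith
    _ ≤ traceConst T E * (s ^ 3 * φ ^ 3) := by
      rw [traceConst]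
      nlinarith [pow_pos (mul_pos (by linarith : 0 < s) hφ0) 3]

lemma carleman_young {κ u v : ℝ} (hT : 0 < T) (hs : 1 ≤ s) (hE : 0 ≤ E)
    (hφ : 4 ≤ T ^ 2 * φ) (hκ : κ ≤ E * T * φ ^ 2) :
    2 * u * v + 2 * s * κ * u ^ 2 ≤
      traceConst T E / √s * ((s * φ)⁻¹ * v ^ 2 + s ^ 3 * φ ^ 3 * u ^ 2) := by
  have hsφ : 0 < s * φ := mul_pos (by linarith) (by nlinarith)
  have hk : 0 < √s * s * φ := by rw [mul_assoc]; exact mul_pos (by positivity) hsφ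
  have hinv : (√s * s * φ)⁻¹ ≤ traceConst T E / √s * (s * φ)⁻¹ := by
    rw [mul_assoc, mul_inv, div_mul_eq_mul_div, ← div_eq_inv_mul]
    gcongr
    exact le_mul_of_one_le_left (inv_pos.mpr hsφ).le (one_le_traceConst hT hE)
  calc 2 * u * v + 2 * s * κ * u ^ 2
      ≤ √s * s * φ * u ^ 2 + (√s * s * φ)⁻¹ * v ^ 2 + 2 * s * (E * T * φ ^ 2) * u ^ 2 := by
        gcongr
        exact two_mul_le_add_mul_sq hk
    _ ≤ _ := by
      nlinarith [mul_le_mul_of_nonneg_right hinv (sq_nonneg v),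
        mul_le_mul_of_nonneg_right (sqrt_mul_add_le_div_sqrt_mul_cube hT hs hE hφ) (sq_nonneg u)]

end Absorption

-- With `A = e^{λη(x)}` and `E = e^{2λM}`, `carlemanWeight` is `e^{2sα(x,t)}` and
-- `A / (t * (T - t))` is `φ(x,t)`.
noncomputable def carlemanWeight (T s A E t : ℝ) : ℝ := exp (2 * s * ((A - E) / (t * (T - t))))

noncomputable def energyDensity (T s A E u v t : ℝ) : ℝ :=
  ((s * (A / (t * (T - t))))⁻¹ * |v| ^ 2 + s ^ 3 * (A / (t * (T - t))) ^ 3 * |u| ^ 2) *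
    carlemanWeight T s A E t

section CarlemanWeight

variable {T s A E t : ℝ}

lemma mul_sub_pos_of_mem_Ioo (ht : t ∈ Ioo 0 T) : 0 < t * (T - t) :=
  mul_pos ht.1 (sub_pos.2 ht.2)

lemma four_le_sq_mul_div_mul_sub (hA : 1 ≤ A) (ht : t ∈ Ioo 0 T) :
    4 ≤ T ^ 2 * (A / (t * (T - t))) := by
  have hl : 0 < t * (T - t) := mul_sub_pos_of_mem_Ioo ht
  rw [mul_div_assoc', le_div_iff₀ hl]
  nlinarith [sq_nonneg (T - 2 * t)]

lemma carlemanWeight_le_one (hs : 0 ≤ s) (hAE : A ≤ E) (ht : t ∈ Ioo 0 T) :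
    carlemanWeight T s A E t ≤ 1 := by
  have hl : 0 < t * (T - t) := mul_sub_pos_of_mem_Ioo ht
  exact exp_le_one_iff.mpr <|
    mul_nonpos_of_nonneg_of_nonpos (by positivity)
      (div_nonpos_of_nonpos_of_nonneg (by linarith) hl.le)

lemma hasDerivAt_carlemanWeight (ht : t * (T - t) ≠ 0) :
    HasDerivAt (carlemanWeight T s A E)
      (2 * s * ((E - A) * (T - 2 * t) / (t * (T - t)) ^ 2) * carlemanWeight T s A E t) t := by
  have hl : HasDerivAt (fun t ↦ t * (T - t)) (T - 2 * t) t :=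
    ((hasDerivAt_id' t).fun_mul ((hasDerivAt_id' t).const_sub T)).congr_deriv (by ring)
  exact (((hasDerivAt_const t (A - E)).fun_div hl ht).const_mul (2 * s)).exp.congr_deriv
    (by rw [carlemanWeight]; ring)

lemma tendsto_carlemanWeight_nhdsGT_zero (hT : 0 < T) (hs : 0 < s) (hAE : A < E) :
    Tendsto (carlemanWeight T s A E) (𝓝[>] 0) (𝓝 0) := by
  have hl : Tendsto (fun t : ℝ ↦ t * (T - t)) (𝓝[>] 0) (𝓝[>] 0) := by
    refine tendsto_nhdsWithin_of_tendsto_nhds_of_eventually_within _ ?_ ?_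
    · exact ((continuous_id.mul (continuous_const.sub continuous_id)).tendsto' 0 0
        (by simp)).mono_left nhdsWithin_le_nhds
    · filter_upwards [Ioo_mem_nhdsGT hT] with t ht using mul_sub_pos_of_mem_Ioo ht
  have hneg : 2 * s * (A - E) < 0 := mul_neg_of_pos_of_neg (by positivity) (by linarith)
  refine tendsto_exp_atBot.comp ?_
  simp_rw [mul_div_assoc', div_eq_mul_inv]
  exact (tendsto_inv_nhdsGT_zero.comp hl).const_mul_atTop_of_neg hneg

lemma energyDensity_nonneg (hs : 0 ≤ s) (hA : 0 ≤ A) (ht : t ∈ Ioo 0 T) (u v : ℝ) :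
    0 ≤ energyDensity T s A E u v t := by
  have hl : 0 < t * (T - t) := mul_sub_pos_of_mem_Ioo ht
  unfold energyDensity carlemanWeight
  positivity

lemma energyDensity_le {c : ℝ} (hT : 0 < T) (hs : 1 ≤ s) (hA : 1 ≤ A) (hc : 0 < c)
    (hcAE : c ≤ E - A) (ht : t ∈ Ioo 0 T) (u v : ℝ) :
    energyDensity T s A E u v t ≤ T ^ 2 / 4 * v ^ 2 + A ^ 3 * (3 / (2 * c)) ^ 3 * u ^ 2 := by
  have hl : 0 < t * (T - t) := mul_sub_pos_of_mem_Ioo ht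
  have hw1 : carlemanWeight T s A E t ≤ 1 := carlemanWeight_le_one (by linarith) (by linarith) ht
  have hw0 : 0 ≤ carlemanWeight T s A E t := (exp_pos _).le
  have hinv : (s * (A / (t * (T - t))))⁻¹ ≤ T ^ 2 / 4 := by
    rw [inv_le_comm₀ (by positivity) (by positivity), inv_div, div_le_iff₀' (by positivity)]
    calc 4 ≤ T ^ 2 * (A / (t * (T - t))) := four_le_sq_mul_div_mul_sub hA ht
      _ ≤ T ^ 2 * (s * (A / (t * (T - t)))) := by
        gcongr; exact le_mul_of_one_le_left (by positivity) hs
  have hcube : s ^ 3 * (A / (t * (T - t))) ^ 3 * carlemanWeight T s A E t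
      ≤ A ^ 3 * (3 / (2 * c)) ^ 3 := by
    have hexp : carlemanWeight T s A E t ≤ exp (-(2 * c * (s / (t * (T - t))))) := by
      refine exp_le_exp.mpr ?_
      rw [show 2 * s * ((A - E) / (t * (T - t))) = -(2 * (E - A) * (s / (t * (T - t)))) by ring]
      gcongr
    calc s ^ 3 * (A / (t * (T - t))) ^ 3 * carlemanWeight T s A E t
        = A ^ 3 * ((s / (t * (T - t))) ^ 3 * carlemanWeight T s A E t) := by ring
      _ ≤ A ^ 3 * ((s / (t * (T - t))) ^ 3 * exp (-(2 * c * (s / (t * (T - t)))))) := by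
        gcongr
      _ ≤ A ^ 3 * (3 / (2 * c)) ^ 3 := by
        gcongr; exact pow_three_mul_exp_neg_le (by positivity) (by positivity)
  unfold energyDensity
  rw [sq_abs, sq_abs]
  calc ((s * (A / (t * (T - t))))⁻¹ * v ^ 2 + s ^ 3 * (A / (t * (T - t))) ^ 3 * u ^ 2) *
        carlemanWeight T s A E t
      = (s * (A / (t * (T - t))))⁻¹ * v ^ 2 * carlemanWeight T s A E t +
          s ^ 3 * (A / (t * (T - t))) ^ 3 * carlemanWeight T s A E t * u ^ 2 := by ring
    _ ≤ T ^ 2 / 4 * v ^ 2 * 1 + A ^ 3 * (3 / (2 * c)) ^ 3 * u ^ 2 := by gcongr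
    _ = T ^ 2 / 4 * v ^ 2 + A ^ 3 * (3 / (2 * c)) ^ 3 * u ^ 2 := by ring

lemma deriv_sq_mul_carlemanWeight_le (hT : 0 < T) (hs : 1 ≤ s) (hA : 1 ≤ A) (hAE : A ≤ E)
    (ht : t ∈ Ioo 0 T) (u v : ℝ) :
    (2 * u * v + 2 * s * ((E - A) * (T - 2 * t) / (t * (T - t)) ^ 2) * u ^ 2) *
        carlemanWeight T s A E t
      ≤ traceConst T E / √s * energyDensity T s A E u v t := by
  have hl : 0 < t * (T - t) := mul_sub_pos_of_mem_Ioo ht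
  have hκ : (E - A) * (T - 2 * t) / (t * (T - t)) ^ 2 ≤ E * T * (A / (t * (T - t))) ^ 2 := by
    rw [div_pow, mul_div_assoc']
    refine div_le_div_of_nonneg_right ?_ (by positivity)
    calc (E - A) * (T - 2 * t) ≤ E * T := by
          nlinarith [mul_nonneg (sub_nonneg.2 hAE) ht.1.le, ht.2]
      _ ≤ E * T * A ^ 2 := le_mul_of_one_le_right (by nlinarith) (one_le_pow₀ hA)
  have hyoung := carleman_young hT hs (by linarith) (four_le_sq_mul_div_mul_sub hA ht) hκ
    (u := u) (v := v)
  unfold energyDensity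
  rw [sq_abs, sq_abs, ← mul_assoc]
  exact mul_le_mul_of_nonneg_right hyoung (exp_pos _).le

lemma sq_mul_carlemanWeight_le_integral (hT : 0 < T) (hs : 1 ≤ s) (hA : 1 ≤ A) (hAE : A < E)
    {y y' : ℝ → ℝ} (hy : ∀ t, HasDerivAt y (y' t) t)
    (hint : IntegrableOn (fun t ↦ energyDensity T s A E (y t) (y' t) t) (Ioo 0 (T / 2))) :
    y (T / 2) ^ 2 * carlemanWeight T s A E (T / 2) ≤
      traceConst T E / √s *
        ∫ t in Ioo 0 (T / 2), energyDensity T s A E (y t) (y' t) t := by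
  classical
  -- At `t = 0` the formula has the junk value `y 0 ^ 2` (as `x / 0 = 0`); `g` takes the limit `0`.
  set g := Function.update (fun t ↦ y t ^ 2 * carlemanWeight T s A E t) 0 0
  have hT2 : 0 < T / 2 := by linarith
  have hIoo : ∀ t ∈ Ioc 0 (T / 2), t ∈ Ioo 0 T := fun t ht ↦ ⟨ht.1, by linarith [ht.2]⟩
  have hderiv : ∀ t ∈ Ioo 0 T, HasDerivAt g
      ((2 * y t * y' t + 2 * s * ((E - A) * (T - 2 * t) / (t * (T - t)) ^ 2) * y t ^ 2) *
        carlemanWeight T s A E t) t := by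
    intro t ht
    have h := ((hy t).fun_pow 2).fun_mul
      (hasDerivAt_carlemanWeight (s := s) (A := A) (E := E) (mul_sub_pos_of_mem_Ioo ht).ne')
    refine (h.congr_deriv (by ring)).congr_of_eventuallyEq ?_
    filter_upwards [eventually_ne_nhds ht.1.ne'] with x hx using Function.update_of_ne hx _ _
  have hcont : ContinuousOn g (Icc 0 (T / 2)) := by
    intro t ht
    rcases eq_or_ne t 0 with rfl | hne
    · refine continuousWithinAt_update_same.mpr ?_
      have h := (((hy 0).continuousAt.tendsto.pow 2).mono_left nhdsWithin_le_nhds).mul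
        (tendsto_carlemanWeight_nhdsGT_zero hT (s := s) (by linarith) hAE)
      rw [mul_zero] at h
      exact h.mono_left (nhdsWithin_mono _ fun x hx ↦ lt_of_le_of_ne hx.1.1 (Ne.symm hx.2))
    · exact (hderiv t (hIoo t ⟨lt_of_le_of_ne ht.1 hne.symm, ht.2⟩)).continuousAt.continuousWithinAt
  have key := intervalIntegral.sub_le_integral_of_hasDeriv_right_of_le hT2.le hcont
    (fun t ht ↦ (hderiv t (hIoo t (Ioo_subset_Ioc_self ht))).hasDerivWithinAt)
    ((integrableOn_Icc_iff_integrableOn_Ioo).mpr (hint.const_mul _))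
    (fun t ht ↦
      deriv_sq_mul_carlemanWeight_le hT hs hA hAE.le (hIoo t (Ioo_subset_Ioc_self ht)) _ _)
  have hg0 : g 0 = 0 := Function.update_self ..
  have hgT : g (T / 2) = y (T / 2) ^ 2 * carlemanWeight T s A E (T / 2) :=
    Function.update_of_ne hT2.ne' ..
  rwa [intervalIntegral.integral_of_le hT2.le, integral_Ioc_eq_integral_Ioo, integral_const_mul,
    hg0, hgT, sub_zero] at key

end CarlemanWeight

lemma measurable_energyDensity (T s E : ℝ) :
    Measurable fun p : ℝ × ℝ × ℝ × ℝ ↦ energyDensity T s p.1 E p.2.1 p.2.2.1 p.2.2.2 := by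
  unfold energyDensity carlemanWeight
  fun_prop

lemma integrable_energyDensity {X : Type*} [TopologicalSpace X] [MeasurableSpace X]
    [OpensMeasurableSpace X] {μ : Measure X} [SFinite μ] {Ω : Set X}
    (hΩ : MeasurableSet Ω) (hμΩ : μ Ω ≠ ⊤) {T s E D : ℝ} {A : X → ℝ} (hT : 0 < T) (hs : 1 ≤ s)
    (hAm : Measurable A) (hA : ∀ x ∈ Ω, 1 ≤ A x ∧ A x ≤ D) (hDE : D < E) {y y' : X → ℝ → ℝ}
    (hy : ContinuousOn (fun q : X × ℝ ↦ y q.1 q.2) (Ω ×ˢ Icc 0 (T / 2)))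
    (hy' : ContinuousOn (fun q : X × ℝ ↦ y' q.1 q.2) (Ω ×ˢ Icc 0 (T / 2))) {B : ℝ}
    (hB : ∀ x ∈ Ω, ∀ t ∈ Icc (0 : ℝ) (T / 2), |y x t| ≤ B ∧ |y' x t| ≤ B) :
    Integrable (Function.uncurry fun x t ↦ energyDensity T s (A x) E (y x t) (y' x t) t)
      ((μ.restrict Ω).prod (volume.restrict (Ioo 0 (T / 2)))) := by
  have hΩI : MeasurableSet (Ω ×ˢ Ioo (0 : ℝ) (T / 2)) := hΩ.prod measurableSet_Ioo
  have hsub : Ω ×ˢ Ioo (0 : ℝ) (T / 2) ⊆ Ω ×ˢ Icc 0 (T / 2) :=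
    prod_mono subset_rfl Ioo_subset_Icc_self
  rw [Measure.prod_restrict]
  have : IsFiniteMeasure ((μ.prod volume).restrict (Ω ×ˢ Ioo (0 : ℝ) (T / 2))) :=
    ⟨by rw [Measure.restrict_apply_univ, Measure.prod_prod]
        exact ENNReal.mul_lt_top hμΩ.lt_top measure_Ioo_lt_top⟩
  have hmeas : AEStronglyMeasurable
      (Function.uncurry fun x t ↦ energyDensity T s (A x) E (y x t) (y' x t) t)
      ((μ.prod volume).restrict (Ω ×ˢ Ioo (0 : ℝ) (T / 2))) :=
    ((measurable_energyDensity T s E).comp_aemeasurable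
      ((hAm.comp measurable_fst).aemeasurable.prodMk
        (((hy.mono hsub).aestronglyMeasurable hΩI).aemeasurable.prodMk
          (((hy'.mono hsub).aestronglyMeasurable hΩI).aemeasurable.prodMk
            measurable_snd.aemeasurable)))).aestronglyMeasurable
  refine Integrable.of_bound hmeas ((T ^ 2 / 4 + D ^ 3 * (3 / (2 * (E - D))) ^ 3) * B ^ 2) ?_
  filter_upwards [ae_restrict_mem hΩI] with ⟨x, t⟩ ⟨hx, ht⟩
  have htT : t ∈ Ioo 0 T := ⟨ht.1, by linarith [ht.2]⟩
  obtain ⟨hyB, hy'B⟩ := hB x hx t (Ioo_subset_Icc_self ht)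
  rw [Function.uncurry_apply_pair, Real.norm_of_nonneg
    (energyDensity_nonneg (by linarith) (by linarith [(hA x hx).1]) htT _ _)]
  calc energyDensity T s (A x) E (y x t) (y' x t) t
      ≤ T ^ 2 / 4 * y' x t ^ 2 + A x ^ 3 * (3 / (2 * (E - D))) ^ 3 * y x t ^ 2 :=
        energyDensity_le hT hs (hA x hx).1 (by linarith) (by linarith [(hA x hx).2]) htT _ _
    _ ≤ T ^ 2 / 4 * B ^ 2 + D ^ 3 * (3 / (2 * (E - D))) ^ 3 * B ^ 2 := by
        have hy2 : y x t ^ 2 ≤ B ^ 2 := sq_le_sq' (abs_le.mp hyB).1 (abs_le.mp hyB).2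
        have hy'2 : y' x t ^ 2 ≤ B ^ 2 := sq_le_sq' (abs_le.mp hy'B).1 (abs_le.mp hy'B).2
        have hA0 : 0 ≤ A x := by linarith [(hA x hx).1]
        have hD0 : 0 ≤ D := hA0.trans (hA x hx).2
        have hDE' : 0 < E - D := sub_pos.2 hDE
        gcongr
        exact (hA x hx).2
    _ = (T ^ 2 / 4 + D ^ 3 * (3 / (2 * (E - D))) ^ 3) * B ^ 2 := by ring

theorem trace_estimate_second_general
    (d : ℕ)
    (Ω : Set (Fin d → ℝ)) (hΩb : Bornology.IsBounded Ω) (hΩm : MeasurableSet Ω)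
    (T : ℝ) (hT : 0 < T)
    (M : ℝ) (hM : 1 ≤ M)
    (η : (Fin d → ℝ) → ℝ) (hηmeas : Measurable η)
    (hη : ∀ x ∈ Ω, 1 ≤ η x ∧ η x ≤ M)
    (lam : ℝ) (hlam : 0 < lam) :
    ∃ C > 0, ∃ s₀ ≥ (1 : ℝ), ∀ s ≥ s₀,
      ∀ y y' : (Fin d → ℝ) → ℝ → ℝ,
        (∀ x : Fin d → ℝ, ∀ t : ℝ, HasDerivAt (y x) (y' x t) t) →
        ContinuousOn (fun q : (Fin d → ℝ) × ℝ => y q.1 q.2) (Ω ×ˢ Icc 0 (T / 2)) →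
        ContinuousOn (fun q : (Fin d → ℝ) × ℝ => y' q.1 q.2) (Ω ×ˢ Icc 0 (T / 2)) →
        (∃ B : ℝ, ∀ x ∈ Ω, ∀ t ∈ Icc (0 : ℝ) (T / 2),
          |y x t| ≤ B ∧ |y' x t| ≤ B) →
        (∫ x in Ω,
            |y x (T / 2)| ^ 2 *
              exp (2 * s * ((exp (lam * η x) - exp (2 * lam * M)) /
                ((T / 2) * (T - T / 2)))))
          ≤ (C / Real.sqrt s) *
            ∫ t in Ioo (0 : ℝ) (T / 2), ∫ x in Ω,
              ((s * (exp (lam * η x) / (t * (T - t))))⁻¹ * |y' x t| ^ 2 +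
                  s ^ 3 * (exp (lam * η x) / (t * (T - t))) ^ 3 * |y x t| ^ 2) *
                exp (2 * s * ((exp (lam * η x) - exp (2 * lam * M)) / (t * (T - t)))) := by
  have hA : ∀ x ∈ Ω, 1 ≤ exp (lam * η x) ∧ exp (lam * η x) ≤ exp (lam * M) := fun x hx ↦
    ⟨one_le_exp (by nlinarith [hη x hx]), exp_le_exp.mpr (by nlinarith [hη x hx])⟩
  have hDE : exp (lam * M) < exp (2 * lam * M) := exp_lt_exp.mpr (by nlinarith)
  refine ⟨traceConst T (exp (2 * lam * M)), one_pos.trans_le (one_le_traceConst hT (exp_pos _).le),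
    1, le_rfl, fun s hs y y' hy hyc hy'c ⟨B, hB⟩ ↦ ?_⟩
  have hF := integrable_energyDensity hΩm (hΩb.measure_lt_top (μ := volume)).ne hT hs
    (hηmeas.const_mul lam).exp hA hDE hyc hy'c hB
  calc _ ≤ ∫ x in Ω, traceConst T (exp (2 * lam * M)) / √s *
          ∫ t in Ioo 0 (T / 2), energyDensity T s (exp (lam * η x)) (exp (2 * lam * M))
            (y x t) (y' x t) t := by
        refine integral_mono_of_nonneg (ae_of_all _ fun x ↦ by positivity)
          (hF.integral_prod_left.const_mul _) ?_
        filter_upwards [hF.prod_right_ae, ae_restrict_mem hΩm] with x hxint hx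
        rw [sq_abs]
        exact sq_mul_carlemanWeight_le_integral hT hs (hA x hx).1 ((hA x hx).2.trans_lt hDE)
          (hy x) hxint
    _ = _ := by rw [integral_const_mul, integral_integral_swap hF]; rfl

/-- Weighted trace-at-`t₀` estimate (second energy inequality of the Third Step):
`∫_Ω |y(x,t₀)|²e^{2sα(x,t₀)}dx
  ≤ (C/√s)∫₀^{t₀}∫_Ω ((sφ)⁻¹|∂_ty|² + s³φ³|y|²)e^{2sα} dx dt`. -/
theorem trace_estimate_second
    (d : ℕ) (hd : 1 ≤ d)
    (Ω : Set (Fin d → ℝ)) (hΩb : Bornology.IsBounded Ω) (hΩm : MeasurableSet Ω)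
    (T : ℝ) (hT : 0 < T)
    (M : ℝ) (hM : 1 ≤ M)
    (η : (Fin d → ℝ) → ℝ) (hηmeas : Measurable η)
    (hη : ∀ x ∈ Ω, 1 ≤ η x ∧ η x ≤ M)
    (lam : ℝ) (hlam : 0 < lam) :
    ∃ C > 0, ∃ s₀ ≥ (1 : ℝ), ∀ s ≥ s₀,
      ∀ y y' : (Fin d → ℝ) → ℝ → ℝ,
        (∀ x : Fin d → ℝ, ∀ t : ℝ, HasDerivAt (y x) (y' x t) t) →
        ContinuousOn (fun q : (Fin d → ℝ) × ℝ => y q.1 q.2) (Ω ×ˢ Icc 0 (T / 2)) →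
        ContinuousOn (fun q : (Fin d → ℝ) × ℝ => y' q.1 q.2) (Ω ×ˢ Icc 0 (T / 2)) →
        (∃ B : ℝ, ∀ x ∈ Ω, ∀ t ∈ Icc (0 : ℝ) (T / 2),
          |y x t| ≤ B ∧ |y' x t| ≤ B) →
        (∫ x in Ω,
            |y x (T / 2)| ^ 2 *
              exp (2 * s * ((exp (lam * η x) - exp (2 * lam * M)) /
                ((T / 2) * (T - T / 2)))))
          ≤ (C / Real.sqrt s) *
            ∫ t in Ioo (0 : ℝ) (T / 2), ∫ x in Ω,
              ((s * (exp (lam * η x) / (t * (T - t))))⁻¹ * |y' x t| ^ 2 +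
                  s ^ 3 * (exp (lam * η x) / (t * (T - t))) ^ 3 * |y x t| ^ 2) *
                exp (2 * s * ((exp (lam * η x) - exp (2 * lam * M)) / (t * (T - t)))) :=
  trace_estimate_second_general d Ω hΩb hΩm T hT M hM η hηmeas hη lam hlam
end

section
/- (Vanishing limit of the weighted time integral, Third Step) Let T > 0, t₀ = T/2, ℓ(t) = t(T−t), and let C₁ > 0. Then lim_{s → ∞} ∫₀^T (1/ℓ(t)) · exp(−2sC₁(1/ℓ(t) − 1/ℓ(t₀))) dt = 0, where the integral is the Lebesgue integral over (0,T). -/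
/-!
Writing `y = 1/ℓ(t)` and `m = 1/ℓ(t₀)`, the integrand is `y · exp(-2sC₁(y - m))` with `y > m`
for every `t ≠ t₀`, so it tends to `0` almost everywhere as `s → ∞`. Once `2sC₁ ≥ 1` it is at most
`y · exp(-(y - m)) ≤ exp(m - 1)`, because `y e^{-y} ≤ e^{-1}`; a constant is integrable over the
bounded interval `(0,T)`, and dominated convergence concludes.
-/

open MeasureTheory Real Set Filter Topology

lemma mul_exp_neg_mul_sub_le {y m s : ℝ} (hy : 0 ≤ y) (hym : m ≤ y) (hs : 1 ≤ s) :
    y * exp (-(s * (y - m))) ≤ exp (m - 1) :=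
  calc y * exp (-(s * (y - m)))
      ≤ y * exp (-(y - m)) := by gcongr; nlinarith
    _ = y * exp (-y) * exp m := by rw [mul_assoc, ← exp_add]; ring_nf
    _ ≤ exp (-1) * exp m := by gcongr; exact mul_exp_neg_le_exp_neg_one y
    _ = exp (m - 1) := by rw [← exp_add]; ring_nf

lemma tendsto_mul_exp_neg_mul_sub_atTop {y m : ℝ} (hym : m < y) (a : ℝ) :
    Tendsto (fun s : ℝ => a * exp (-(s * (y - m)))) atTop (𝓝 0) := by
  have h := tendsto_exp_neg_atTop_nhds_zero.comp
    (tendsto_id.atTop_mul_const (sub_pos.2 hym))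
  simpa using h.const_mul a

theorem tendsto_integral_mul_exp_neg_mul_sub_atTop {α : Type*} [MeasurableSpace α]
    {μ : Measure α} [IsFiniteMeasure μ] {y : α → ℝ} (hy : AEStronglyMeasurable y μ)
    {m : ℝ} (hm : 0 ≤ m) (hym : ∀ᵐ t ∂μ, m < y t) :
    Tendsto (fun s : ℝ => ∫ t, y t * exp (-(s * (y t - m))) ∂μ) atTop (𝓝 0) := by
  have h_meas : ∀ s : ℝ, AEStronglyMeasurable (fun t => y t * exp (-(s * (y t - m)))) μ :=
    fun s => hy.mul (continuous_exp.comp_aestronglyMeasurable (by fun_prop))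
  have h_bound : ∀ᶠ s in atTop, ∀ᵐ t ∂μ, ‖y t * exp (-(s * (y t - m)))‖ ≤ exp (m - 1) := by
    filter_upwards [eventually_ge_atTop 1] with s hs
    filter_upwards [hym] with t ht
    have hy0 : 0 ≤ y t := hm.trans ht.le
    rw [norm_of_nonneg (by positivity)]
    exact mul_exp_neg_mul_sub_le hy0 ht.le hs
  have h_lim := tendsto_integral_filter_of_dominated_convergence (fun _ => exp (m - 1))
    (Eventually.of_forall h_meas) h_bound (integrable_const _)
    (hym.mono fun t ht => tendsto_mul_exp_neg_mul_sub_atTop ht (y t))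
  simpa using h_lim

lemma mul_sub_lt_half_mul_sub {T t : ℝ} (ht : t ≠ T / 2) : t * (T - t) < T / 2 * (T - T / 2) := by
  nlinarith [sq_pos_of_ne_zero (sub_ne_zero.2 ht)]

theorem weighted_time_integral_vanishes_general
    (T : ℝ)
    (C₁ : ℝ) (hC₁ : 0 < C₁) :
    Tendsto
      (fun s : ℝ =>
        ∫ t in Ioo (0 : ℝ) T,
          (1 / (t * (T - t))) *
            exp (-(2 * s * C₁ * (1 / (t * (T - t)) - 1 / ((T / 2) * (T - T / 2))))))
      atTop (nhds 0) := by
  have h_gap : ∀ᵐ t ∂volume.restrict (Ioo 0 T),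
      1 / ((T / 2) * (T - T / 2)) < 1 / (t * (T - t)) := by
    filter_upwards [ae_restrict_mem measurableSet_Ioo,
      ae_restrict_of_ae (Measure.ae_ne volume (T / 2))] with t ht hne
    exact one_div_lt_one_div_of_lt (mul_pos ht.1 (sub_pos.2 ht.2)) (mul_sub_lt_half_mul_sub hne)
  have h_scale : Tendsto (fun s : ℝ => 2 * s * C₁) atTop atTop :=
    (tendsto_id.const_mul_atTop two_pos).atTop_mul_const hC₁
  have h_meas : AEStronglyMeasurable (fun t : ℝ => 1 / (t * (T - t))) (volume.restrict (Ioo 0 T)) :=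
    (by fun_prop : Measurable fun t : ℝ => 1 / (t * (T - t))).aestronglyMeasurable
  have h_pos : 0 ≤ 1 / ((T / 2) * (T - T / 2)) := one_div_nonneg.2 (by nlinarith [sq_nonneg T])
  exact (tendsto_integral_mul_exp_neg_mul_sub_atTop h_meas h_pos h_gap).comp h_scale

/-- Vanishing limit of the weighted time integral (Third Step):
`∫₀^T (1/ℓ(t))·exp(−2sC₁(1/ℓ(t) − 1/ℓ(t₀))) dt → 0` as `s → ∞`. -/
theorem weighted_time_integral_vanishes
    (T : ℝ) (hT : 0 < T)
    (C₁ : ℝ) (hC₁ : 0 < C₁) :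
    Tendsto
      (fun s : ℝ =>
        ∫ t in Ioo (0 : ℝ) T,
          (1 / (t * (T - t))) *
            exp (-(2 * s * C₁ * (1 / (t * (T - t)) - 1 / ((T / 2) * (T - T / 2))))))
      atTop (nhds 0) :=
  weighted_time_integral_vanishes_general T C₁ hC₁
end

section
/- (Absorption of the space–time weighted norm by the time-t₀ weighted norm, Third Step) Fix λ > 0. For every δ > 0 there exists s₀ > 0 such that for all s ≥ s₀ and all f ∈ L²(Ω): ∫_Ω ∫₀^T φ(x,t) |f(x)|² e^{2sα(x,t)} dt dx ≤ δ ∫_Ω φ(x,t₀) |f(x)|² e^{2sα(x,t₀)} dx. In other words, ∫_Q φ |f|² e^{2sα} dx dt = o(1) · ∫_Ω φ(·,t₀)|f|² e^{2sα(·,t₀)} dx as s → ∞, uniformly in f. -/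
open MeasureTheory Real Set Filter Topology

/-!
Write `ℓ(t) = t (T - t)`, `L = ℓ(t₀) = max ℓ` and `u(t) = ℓ(t)⁻¹ - L⁻¹ ≥ 0`, which vanishes only
at `t₀`. With `h = e^{2λM} - e^{λη}`, the ratio of the integrand at time `t` to the one at `t₀` is
`(1 + L u) e^{-2 s h u} ≤ e^{-(2 s h - L) u}`, and `h ≥ e^{2λM} - e^{λM} > 0` uniformly in `x`.
By dominated convergence `∫₀ᵀ e^{-κ u} → 0` as `κ → ∞`; fix `κ` with this integral `≤ δ`, take `s`
so large that `2 s h - L ≥ κ` for every `x`, and integrate over `Ω`.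
-/

section

variable {α : Type*} [MeasurableSpace α] {μ : Measure α} [IsFiniteMeasure μ] {g : α → ℝ}

lemma integrable_exp_neg_mul (hg : AEStronglyMeasurable g μ) (hg0 : ∀ᵐ x ∂μ, 0 ≤ g x)
    {κ : ℝ} (hκ : 0 ≤ κ) : Integrable (fun x => exp (-(κ * g x))) μ :=
  .of_bound (by fun_prop) 1 <| hg0.mono fun x hx => by
    rw [norm_of_nonneg (exp_pos _).le, exp_le_one_iff, neg_nonpos]
    positivity

lemma tendsto_integral_exp_neg_mul_atTop (hg : AEStronglyMeasurable g μ)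
    (hg0 : ∀ᵐ x ∂μ, 0 < g x) :
    Tendsto (fun κ => ∫ x, exp (-(κ * g x)) ∂μ) atTop (𝓝 0) := by
  have hlim : ∀ᵐ x ∂μ, Tendsto (fun κ => exp (-(κ * g x))) atTop (𝓝 0) :=
    hg0.mono fun x hx => tendsto_exp_neg_atTop_nhds_zero.comp (tendsto_id.atTop_mul_const hx)
  simpa using tendsto_integral_filter_of_dominated_convergence (fun _ => (1 : ℝ))
    (.of_forall fun κ => by fun_prop)
    ((eventually_ge_atTop 0).mono fun κ hκ => hg0.mono fun x hx => by
      rw [norm_of_nonneg (exp_pos _).le, exp_le_one_iff, neg_nonpos]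
      positivity)
    (integrable_const 1) hlim

end

lemma inv_mul_exp_neg_div_le {ℓ L a κ : ℝ} (hℓ : 0 < ℓ) (hℓL : ℓ ≤ L) (hκ : κ + L ≤ a) :
    ℓ⁻¹ * exp (-(a / ℓ)) ≤ L⁻¹ * exp (-(a / L)) * exp (-(κ * (ℓ⁻¹ - L⁻¹))) := by
  have hL : 0 < L := hℓ.trans_le hℓL
  set u := ℓ⁻¹ - L⁻¹ with hu
  have hu0 : 0 ≤ u := sub_nonneg.2 (inv_anti₀ hℓ hℓL)
  calc ℓ⁻¹ * exp (-(a / ℓ)) = L⁻¹ * (L * u + 1) * (exp (-(a / L)) * exp (-(a * u))) := by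
        rw [← exp_add, show -(a / L) + -(a * u) = -(a / ℓ) by rw [hu]; ring]
        rw [hu]; field_simp; ring
    _ ≤ L⁻¹ * exp (L * u) * (exp (-(a / L)) * exp (-(a * u))) := by
        gcongr; exact add_one_le_exp _
    _ = L⁻¹ * exp (-(a / L)) * exp (-((a - L) * u)) := by
        rw [mul_assoc, mul_left_comm (exp _), ← exp_add]; ring_nf
    _ ≤ L⁻¹ * exp (-(a / L)) * exp (-(κ * u)) := by gcongr; nlinarith

lemma mul_sub_le_half_mul_sub_half (T t : ℝ) : t * (T - t) ≤ T / 2 * (T - T / 2) := by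
  nlinarith [sq_nonneg (t - T / 2)]

/-- `ℓ(t)⁻¹ - ℓ(t₀)⁻¹` for `ℓ(t) = t (T - t)` and `t₀ = T / 2`. -/
noncomputable def timeGap (T t : ℝ) : ℝ := (t * (T - t))⁻¹ - (T / 2 * (T - T / 2))⁻¹

lemma measurable_timeGap (T : ℝ) : Measurable (timeGap T) := by
  unfold timeGap; fun_prop

lemma ae_timeGap_pos (T : ℝ) : ∀ᵐ t ∂volume.restrict (Ioo 0 T), 0 < timeGap T t := by
  filter_upwards [ae_restrict_mem measurableSet_Ioo, ae_restrict_of_ae (volume.ae_ne (T / 2))]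
    with t ⟨ht0, htT⟩ hne
  have hlt : t * (T - t) < T / 2 * (T - T / 2) := by
    nlinarith [sq_pos_of_ne_zero (sub_ne_zero.2 hne)]
  exact sub_pos.2 (inv_strictAnti₀ (by nlinarith) hlt)

lemma setIntegral_Ioo_weight_le {T A B c s κ : ℝ} (hA : 0 ≤ A) (hc : 0 ≤ c) (hκ0 : 0 ≤ κ)
    (hκ : κ + T / 2 * (T - T / 2) ≤ 2 * s * (B - A)) :
    ∫ t in Ioo 0 T, A / (t * (T - t)) * c * exp (2 * s * ((A - B) / (t * (T - t))))
      ≤ (∫ t in Ioo 0 T, exp (-(κ * timeGap T t))) *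
        (A / (T / 2 * (T - T / 2)) * c * exp (2 * s * ((A - B) / (T / 2 * (T - T / 2))))) := by
  have hform : ∀ ℓ, A / ℓ * c * exp (2 * s * ((A - B) / ℓ))
      = A * c * (ℓ⁻¹ * exp (-(2 * s * (B - A) / ℓ))) := fun ℓ => by
    rw [show 2 * s * ((A - B) / ℓ) = -(2 * s * (B - A) / ℓ) by ring]; ring
  rw [← integral_mul_const]
  refine integral_mono_of_nonneg ?_ ?_ ?_
  · filter_upwards [ae_restrict_mem measurableSet_Ioo] with t ⟨ht0, htT⟩
    have : 0 < t * (T - t) := by nlinarith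
    positivity
  · exact (integrable_exp_neg_mul (measurable_timeGap T).aestronglyMeasurable
      ((ae_timeGap_pos T).mono fun _ h => h.le) hκ0).mul_const _
  · filter_upwards [ae_restrict_mem measurableSet_Ioo] with t ⟨ht0, htT⟩
    calc _ = A * c * ((t * (T - t))⁻¹ * exp (-(2 * s * (B - A) / (t * (T - t))))) := hform _
      _ ≤ A * c * ((T / 2 * (T - T / 2))⁻¹ * exp (-(2 * s * (B - A) / (T / 2 * (T - T / 2)))) *
            exp (-(κ * timeGap T t))) :=
          mul_le_mul_of_nonneg_left (inv_mul_exp_neg_div_le (by nlinarith)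
            (mul_sub_le_half_mul_sub_half T t) hκ) (by positivity)
      _ = _ := by rw [hform]; ring

lemma integrableOn_weight_mul_sq_abs {α : Type*} [MeasurableSpace α] {μ : Measure α}
    {Ω : Set α} (hΩ : MeasurableSet Ω) {f A : α → ℝ} (hf : MemLp f 2 (μ.restrict Ω))
    (hA : Measurable A) {B L s : ℝ} (hL : 0 < L) (hs : 0 ≤ s)
    (hAB : ∀ x ∈ Ω, 0 ≤ A x ∧ A x ≤ B) :
    IntegrableOn (fun x => A x / L * |f x| ^ 2 * exp (2 * s * ((A x - B) / L))) Ω μ := by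
  have hA_bound : ∀ᵐ x ∂μ.restrict Ω, ‖A x / L‖ ≤ B / L :=
    ae_restrict_of_forall_mem hΩ fun x hx => by
      rw [norm_of_nonneg (div_nonneg (hAB x hx).1 hL.le)]
      exact div_le_div_of_nonneg_right (hAB x hx).2 hL.le
  have hexp_bound : ∀ᵐ x ∂μ.restrict Ω, ‖exp (2 * s * ((A x - B) / L))‖ ≤ 1 :=
    ae_restrict_of_forall_mem hΩ fun x hx => by
      rw [norm_of_nonneg (exp_pos _).le, exp_le_one_iff]
      exact mul_nonpos_of_nonneg_of_nonpos (by positivity)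
        (div_nonpos_of_nonpos_of_nonneg (sub_nonpos.2 (hAB x hx).2) hL.le)
  simp only [sq_abs]
  exact (hf.integrable_sq.bdd_mul (by fun_prop) hA_bound).mul_bdd (by fun_prop) hexp_bound

theorem spacetime_absorption_general
    (d : ℕ)
    (Ω : Set (Fin d → ℝ)) (hΩm : MeasurableSet Ω)
    (T : ℝ) (hT : 0 < T)
    (M : ℝ) (hM : 1 ≤ M)
    (η : (Fin d → ℝ) → ℝ) (hηmeas : Measurable η)
    (hη : ∀ x ∈ Ω, 1 ≤ η x ∧ η x ≤ M)
    (lam : ℝ) (hlam : 0 < lam) :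
    ∀ δ > (0 : ℝ), ∃ s₀ > (0 : ℝ), ∀ s ≥ s₀,
      ∀ f : (Fin d → ℝ) → ℝ, MemLp f 2 (volume.restrict Ω) →
        (∫ x in Ω, ∫ t in Ioo (0 : ℝ) T,
            (exp (lam * η x) / (t * (T - t))) * |f x| ^ 2 *
              exp (2 * s * ((exp (lam * η x) - exp (2 * lam * M)) / (t * (T - t)))))
          ≤ δ *
            ∫ x in Ω,
              (exp (lam * η x) / ((T / 2) * (T - T / 2))) * |f x| ^ 2 *
                exp (2 * s * ((exp (lam * η x) - exp (2 * lam * M)) /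
                  ((T / 2) * (T - T / 2)))) := by
  intro δ hδ
  have hL : 0 < T / 2 * (T - T / 2) := by nlinarith
  obtain ⟨κ, hκδ, hκ0⟩ := (((tendsto_integral_exp_neg_mul_atTop
    (measurable_timeGap T).aestronglyMeasurable (ae_timeGap_pos T)).eventually
      (ge_mem_nhds hδ)).and (eventually_ge_atTop 0)).exists
  have hgap : exp (lam * M) < exp (2 * lam * M) := exp_lt_exp.2 (by nlinarith)
  have hηM : ∀ x ∈ Ω, exp (lam * η x) ≤ exp (lam * M) := fun x hx =>
    exp_le_exp.2 (mul_le_mul_of_nonneg_left (hη x hx).2 hlam.le)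
  refine ⟨(κ + T / 2 * (T - T / 2)) / (2 * (exp (2 * lam * M) - exp (lam * M))),
    div_pos (by linarith) (by linarith), fun s hs f hf => ?_⟩
  rw [ge_iff_le, div_le_iff₀ (by linarith)] at hs
  have hs0 : 0 ≤ s := by nlinarith
  rw [← integral_const_mul]
  refine integral_mono_of_nonneg (.of_forall fun x => setIntegral_nonneg measurableSet_Ioo
    fun t ⟨ht0, htT⟩ => ?_) (.const_mul ?_ δ) ?_
  · have : 0 < t * (T - t) := by nlinarith
    positivity
  · exact integrableOn_weight_mul_sq_abs hΩm hf (by fun_prop) hL hs0 fun x hx =>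
      ⟨(exp_pos _).le, (hηM x hx).trans hgap.le⟩
  · filter_upwards [ae_restrict_mem hΩm] with x hx
    refine (setIntegral_Ioo_weight_le (exp_pos _).le (sq_nonneg _) hκ0 ?_).trans
      (mul_le_mul_of_nonneg_right hκδ (by positivity))
    nlinarith [hηM x hx]

/-- Absorption of the space–time weighted norm by the time-`t₀` weighted norm
(Third Step): `∫_Q φ|f|²e^{2sα} dx dt = o(1)·∫_Ω φ(·,t₀)|f|²e^{2sα(·,t₀)} dx`
as `s → ∞`, uniformly in `f ∈ L²(Ω)`. -/
theorem spacetime_absorption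
    (d : ℕ) (hd : 1 ≤ d)
    (Ω : Set (Fin d → ℝ)) (hΩb : Bornology.IsBounded Ω) (hΩm : MeasurableSet Ω)
    (T : ℝ) (hT : 0 < T)
    (M : ℝ) (hM : 1 ≤ M)
    (η : (Fin d → ℝ) → ℝ) (hηmeas : Measurable η)
    (hη : ∀ x ∈ Ω, 1 ≤ η x ∧ η x ≤ M)
    (lam : ℝ) (hlam : 0 < lam) :
    ∀ δ > (0 : ℝ), ∃ s₀ > (0 : ℝ), ∀ s ≥ s₀,
      ∀ f : (Fin d → ℝ) → ℝ, MemLp f 2 (volume.restrict Ω) →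
        (∫ x in Ω, ∫ t in Ioo (0 : ℝ) T,
            (exp (lam * η x) / (t * (T - t))) * |f x| ^ 2 *
              exp (2 * s * ((exp (lam * η x) - exp (2 * lam * M)) / (t * (T - t)))))
          ≤ δ *
            ∫ x in Ω,
              (exp (lam * η x) / ((T / 2) * (T - T / 2))) * |f x| ^ 2 *
                exp (2 * s * ((exp (lam * η x) - exp (2 * lam * M)) /
                  ((T / 2) * (T - T / 2)))) :=
  spacetime_absorption_general d Ω hΩm T hT M hM η hηmeas hη lam hlam
end
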